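/- In the idempotent generated subsemigroup ⟨E_n⟩ of the Kauffman monoid K_n (n ≥ 3), the sets D_1 = {h[i,j] : i,j of opposite parity, i odd} and D_2 = {h[i,j] : i,j of opposite parity, i even} are distinct J-classes, and they are incomparable in the partial order on J-classes (neither D_1 ≤ D_2 nor D_2 ≤ D_1). -/

import Mathlib

namespace Kauffman

open FreeMonoid

/-- Defining relations of the Kauffman monoid `K n`: letter `0` is the generator `c`,
letter `i` (for `1 ≤ i < n`) is the generator `h_i`.  The relations are
`h_i h_j = h_j h_i` for `|i - j| ≥ 2`, `h_i h_j h_i = h_i` for `|i - j| = 1`, and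
`h_i ^ 2 = c h_i = h_i c`. -/
inductive Rel (n : ℕ) : FreeMonoid ℕ → FreeMonoid ℕ → Prop
  | comm (i j : ℕ) : 1 ≤ i → i < n → 1 ≤ j → j < n → i + 2 ≤ j →
      Rel n (of i * of j) (of j * of i)
  | braid₁ (i : ℕ) : 1 ≤ i → i + 1 < n →
      Rel n (of i * of (i + 1) * of i) (of i)
  | braid₂ (i : ℕ) : 1 ≤ i → i + 1 < n →
      Rel n (of (i + 1) * of i * of (i + 1)) (of (i + 1))
  | sq (i : ℕ) : 1 ≤ i → i < n → Rel n (of i * of i) (of 0 * of i)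
  | ccomm (i : ℕ) : 1 ≤ i → i < n → Rel n (of 0 * of i) (of i * of 0)

def kcon (n : ℕ) : Con (FreeMonoid ℕ) := conGen (Rel n)

/-- The Kauffman monoid `K_n`, as the quotient of the free monoid by the defining relations. -/
abbrev K (n : ℕ) := (kcon n).Quotient

/-- The generator `c` of `K n`. -/
def C (n : ℕ) : K n := (kcon n).mk' (of 0)

/-- The generator `h_i` of `K n` (meaningful for `1 ≤ i < n`). -/
def H (n : ℕ) (i : ℕ) : K n := (kcon n).mk' (of i)

/-- Descending block `h[j,i] = h_j h_{j-1} ⋯ h_i` (for `i ≤ j`). -/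
def blockD (n j i : ℕ) : K n := ((List.range' i (j + 1 - i)).reverse.map (H n)).prod

/-- Ascending block `h[i,j] = h_i h_{i+1} ⋯ h_j` (for `i ≤ j`). -/
def blockA (n i j : ℕ) : K n := ((List.range' i (j + 1 - i)).map (H n)).prod

/-- General `h[i,j]`: ascending product if `i ≤ j`, descending otherwise. -/
def hb (n i j : ℕ) : K n := if i ≤ j then blockA n i j else blockD n i j

/-- The set `E'_n` of the length-two idempotents `h_{i+1} h_i` and `h_i h_{i+1}`. -/
def E' (n : ℕ) : Set (K n) :=
  {x | ∃ i, 1 ≤ i ∧ i + 1 < n ∧ (x = H n (i + 1) * H n i ∨ x = H n i * H n (i + 1))}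

/-- The idempotent generated subsemigroup `⟨E_n⟩` of `K n` (it contains the identity,
which is idempotent, so it is a submonoid). -/
def ES (n : ℕ) : Submonoid (K n) := Submonoid.closure {x : K n | IsIdempotentElem x}

/-- `J`-preorder on a monoid: `x ≤_J y` iff `x ∈ S¹ y S¹`; the induced order on
`J`-classes is `J_x ≤ J_y ↔ Jle x y`. -/
def Jle {M : Type*} [Monoid M] (x y : M) : Prop := ∃ a b : M, x = a * y * b

/-- Green's relation `J`. -/
def JRel {M : Type*} [Monoid M] (x y : M) : Prop := Jle x y ∧ Jle y x

/-- `D_1`: the white blocks and inverse blocks `h[i,j]` with `i` odd (and `j` even). -/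
def D1 (n : ℕ) : Set (ES n) :=
  {x | ∃ i j, 1 ≤ i ∧ i < n ∧ 1 ≤ j ∧ j < n ∧ i % 2 = 1 ∧ j % 2 = 0 ∧ (x : K n) = hb n i j}

/-- `D_2`: the white blocks and inverse blocks `h[i,j]` with `i` even (and `j` odd). -/
def D2 (n : ℕ) : Set (ES n) :=
  {x | ∃ i j, 1 ≤ i ∧ i < n ∧ 1 ≤ j ∧ j < n ∧ i % 2 = 0 ∧ j % 2 = 1 ∧ (x : K n) = hb n i j}

/-! ### Auxiliary invariant monoid `MM` -/

inductive MM : Type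
  | zero : MM
  | one : MM
  | ee (a b : ℕ) : MM
deriving DecidableEq

namespace MM

def mul' : MM → MM → MM
  | one, x => x
  | zero, zero => zero
  | zero, one => zero
  | zero, ee _ _ => zero
  | ee a b, one => ee a b
  | ee _ _, zero => zero
  | ee a b, ee c d => if b = c + 1 ∨ c = b + 1 then ee a d else zero

instance : Monoid MM where
  mul := mul'
  one := one
  one_mul x := rfl
  mul_one x := by cases x <;> rfl
  mul_assoc x y z := by
    cases x <;> cases y <;> cases z <;> simp only [(· * ·), Mul.mul, mul'] <;>
      (try rfl) <;> split_ifs <;> simp_all [mul'] <;> split_ifs <;> simp_all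

lemma mul_def (x y : MM) : x * y = mul' x y := rfl

lemma one_def : (1 : MM) = MM.one := rfl

lemma zmul (x : MM) : MM.zero * x = MM.zero := by cases x <;> rfl

lemma mulz (x : MM) : x * MM.zero = MM.zero := by cases x <;> rfl

/-- Parity-good elements: images of the idempotent-generated submonoid. -/
def good : MM → Prop
  | zero => True
  | one => True
  | ee a b => a % 2 ≠ b % 2

lemma good_one : good (1 : MM) := trivial

lemma good_mul : ∀ {u v : MM}, good u → good v → good (u * v) := by
  intro u v hu hv
  cases u <;> cases v <;> simp only [mul_def, mul', good] at * <;> try trivial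
  split_ifs with h
  · simp only [good]; omega
  · trivial

lemma lmul_ee (u : MM) (a b : ℕ) :
    u * MM.ee a b = MM.zero ∨
      ∃ a', u * MM.ee a b = MM.ee a' b ∧ (good u → a' % 2 = a % 2) := by
  cases u with
  | zero => exact Or.inl (zmul _)
  | one => exact Or.inr ⟨a, rfl, fun _ => rfl⟩
  | ee c d =>
      simp only [mul_def, mul']
      split_ifs with h
      · exact Or.inr ⟨c, rfl, fun hg => by simp only [good] at hg; omega⟩
      · exact Or.inl rfl

lemma rmul_ee (v : MM) (a b : ℕ) :
    MM.ee a b * v = MM.zero ∨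
      ∃ b', MM.ee a b * v = MM.ee a b' ∧ (good v → b' % 2 = b % 2) := by
  cases v with
  | zero => exact Or.inl (mulz _)
  | one => exact Or.inr ⟨b, rfl, fun _ => rfl⟩
  | ee c d =>
      simp only [mul_def, mul']
      split_ifs with h
      · exact Or.inr ⟨d, rfl, fun hg => by simp only [good] at hg; omega⟩
      · exact Or.inl rfl

lemma sandwich_parity {u v : MM} {a b i j : ℕ} (hu : good u) (hv : good v)
    (h : u * MM.ee a b * v = MM.ee i j) : i % 2 = a % 2 ∧ j % 2 = b % 2 := by
  rcases lmul_ee u a b with h1 | ⟨a', h1, hp⟩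
  · rw [h1, zmul] at h; exact absurd h (by simp)
  · rw [h1] at h
    rcases rmul_ee v a' b with h2 | ⟨b', h2, hq⟩
    · rw [h2] at h; exact absurd h (by simp)
    · rw [h2] at h
      injection h with e1 e2
      subst e1; subst e2
      exact ⟨hp hu, hq hv⟩

lemma sandwich_ne_one {u v : MM} {a b : ℕ} : u * MM.ee a b * v ≠ 1 := by
  rcases lmul_ee u a b with h1 | ⟨a', h1, _⟩ <;> rw [h1]
  · rw [zmul]; simp [one_def]
  · rcases rmul_ee v a' b with h2 | ⟨b', h2, _⟩ <;> rw [h2] <;> simp [one_def]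

lemma sandwich_zero (u v : MM) : u * MM.zero * v = MM.zero := by rw [mulz, zmul]

end MM
section Blocks

variable {n : ℕ}

lemma kc_of {u v : FreeMonoid ℕ} (h : Rel n u v) : kcon n u v := ConGen.Rel.of _ _ h

lemma kmk {u v : FreeMonoid ℕ} (h : kcon n u v) : (kcon n).mk' u = (kcon n).mk' v :=
  (Con.eq _).mpr h

lemma braid1 (i : ℕ) (h1 : 1 ≤ i) (h2 : i + 1 < n) :
    H n i * H n (i + 1) * H n i = H n i := by
  have h := kmk (kc_of (Rel.braid₁ i h1 h2))
  simpa [map_mul, H] using h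

lemma braid2 (i : ℕ) (h1 : 1 ≤ i) (h2 : i + 1 < n) :
    H n (i + 1) * H n i * H n (i + 1) = H n (i + 1) := by
  have h := kmk (kc_of (Rel.braid₂ i h1 h2))
  simpa [map_mul, H] using h

lemma prod_map_H : ∀ l : List ℕ, (l.map (H n)).prod = (kcon n).mk' (ofList l)
  | [] => by simp [show (ofList ([] : List ℕ) : FreeMonoid ℕ) = 1 from rfl]
  | x :: t => by
      rw [List.map_cons, List.prod_cons, prod_map_H t, ofList_cons, map_mul]
      rfl

lemma hb_up {a b : ℕ} (h : a ≤ b) :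
    hb n a b = (kcon n).mk' (ofList (List.range' a (b + 1 - a))) := by
  rw [hb, if_pos h, blockA, prod_map_H]

lemma hb_down' {a b : ℕ} (h : b ≤ a) :
    hb n a b = (kcon n).mk' (ofList ((List.range' b (a + 1 - b)).reverse)) := by
  rcases lt_or_eq_of_le h with hlt | rfl
  · rw [hb, if_neg (by omega), blockD, prod_map_H]
  · rw [hb, if_pos le_rfl, blockA, prod_map_H]
    have e : b + 1 - b = 1 := by omega
    rw [e]
    rfl

lemma hb_self (a : ℕ) : hb n a a = H n a := by
  rw [hb_up le_rfl]
  have e : a + 1 - a = 1 := by omega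
  rw [e]
  rfl

lemma up_concat {a b : ℕ} (h : a ≤ b) : hb n a (b + 1) = hb n a b * H n (b + 1) := by
  rw [hb_up (by omega : a ≤ b + 1), hb_up h]
  have e1 : b + 1 + 1 - a = (b + 1 - a) + 1 := by omega
  rw [e1, List.range'_1_concat]
  have e2 : a + (b + 1 - a) = b + 1 := by omega
  rw [e2, ofList_append, map_mul]
  rfl

lemma up_cons {a b : ℕ} (h : a < b) : hb n a b = H n a * hb n (a + 1) b := by
  rw [hb_up h.le, hb_up (by omega : a + 1 ≤ b)]
  have e1 : b + 1 - a = (b + 1 - (a + 1)) + 1 := by omega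
  rw [e1, List.range'_succ, ofList_cons, map_mul]
  rfl

lemma down_cons {a b : ℕ} (h : b < a) : hb n a b = H n a * hb n (a - 1) b := by
  rw [hb_down' h.le, hb_down' (by omega : b ≤ a - 1)]
  have e1 : a + 1 - b = (a - b) + 1 := by omega
  rw [e1, List.range'_1_concat]
  have e2 : b + (a - b) = a := by omega
  rw [e2, List.reverse_append]
  simp only [List.reverse_cons, List.reverse_nil, List.nil_append, List.singleton_append]
  rw [ofList_cons, map_mul]
  have e3 : a - 1 + 1 - b = a - b := by omega
  rw [e3]
  rfl

lemma down_concat {a b : ℕ} (h : b < a) : hb n a b = hb n a (b + 1) * H n b := by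
  rw [hb_down' h.le, hb_down' (by omega : b + 1 ≤ a)]
  have e1 : a + 1 - b = (a - b) + 1 := by omega
  rw [e1, List.range'_succ, List.reverse_cons, ofList_append, map_mul]
  have e2 : a + 1 - (b + 1) = a - b := by omega
  rw [e2]
  rfl

lemma ext_right (a b c : ℕ) (hb1 : 1 ≤ b) (hbn : b < n) (hc1 : 1 ≤ c) (hcn : c < n)
    (hint : b = c + 1 ∨ c = b + 1) : hb n a b * H n c = hb n a c := by
  rcases hint with hbc | hcb
  · -- `b = c + 1`, extend downwards
    subst hbc
    rcases le_or_gt a c with hac | hca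
    · rcases lt_or_eq_of_le hac with hlt | rfl
      · -- a < c
        obtain ⟨c', rfl⟩ : ∃ c', c = c' + 1 := ⟨c - 1, by omega⟩
        rw [up_concat (by omega : a ≤ c' + 1), up_concat (by omega : a ≤ c')]
        rw [mul_assoc (hb n a c'), mul_assoc (hb n a c')]
        rw [braid1 (c' + 1) (by omega) (by omega)]
      · -- a = c
        rw [up_cons (by omega : a < a + 1), hb_self (a + 1), hb_self a]
        exact braid1 a hc1 hbn
    · -- c < a
      exact (down_concat hca).symm
  · -- `c = b + 1`, extend upwards
    subst hcb
    rcases le_or_gt a b with hab | hba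
    · exact (up_concat hab).symm
    · rcases lt_or_eq_of_le (by omega : b + 1 ≤ a) with hgt | rfl
      · -- b + 1 < a
        rw [down_concat (by omega : b < a), down_concat (by omega : b + 1 < a)]
        rw [mul_assoc (hb n a (b + 1 + 1)), mul_assoc (hb n a (b + 1 + 1))]
        rw [braid2 b hb1 hcn]
      · -- a = b + 1
        rw [down_concat (by omega : b < b + 1), hb_self (b + 1)]
        exact braid2 b hb1 hcn

lemma glueUp : ∀ (k a b c : ℕ), 1 ≤ b → b < n → 1 ≤ c → c + k < n →
    (b = c + 1 ∨ c = b + 1) → hb n a b * hb n c (c + k) = hb n a (c + k)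
  | 0, a, b, c, hb1, hbn, hc1, hckn, hint => by
      simpa [hb_self] using ext_right a b c hb1 hbn hc1 (by omega) hint
  | (k + 1), a, b, c, hb1, hbn, hc1, hckn, hint => by
      rw [up_cons (show c < c + (k + 1) by omega)]
      rw [← mul_assoc, ext_right a b c hb1 hbn hc1 (by omega) hint]
      have h := glueUp k a c (c + 1) hc1 (by omega) (by omega) (by omega) (Or.inr rfl)
      have e : c + 1 + k = c + (k + 1) := by omega
      rw [e] at h
      exact h

lemma glueDown : ∀ (k a b c : ℕ), 1 ≤ b → b < n → 1 ≤ c - k → c < n →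
    (b = c + 1 ∨ c = b + 1) → hb n a b * hb n c (c - k) = hb n a (c - k)
  | 0, a, b, c, hb1, hbn, hck, hcn, hint => by
      simpa [hb_self] using ext_right a b c hb1 hbn (by omega) hcn hint
  | (k + 1), a, b, c, hb1, hbn, hck, hcn, hint => by
      obtain ⟨c', rfl⟩ : ∃ c', c = c' + 1 := ⟨c - 1, by omega⟩
      have e : c' + 1 - (k + 1) = c' - k := by omega
      rw [e, down_cons (show c' - k < c' + 1 by omega)]
      have e2 : c' + 1 - 1 = c' := by omega
      rw [e2, ← mul_assoc, ext_right a b (c' + 1) hb1 hbn (by omega) hcn hint]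
      exact glueDown k a (c' + 1) c' (by omega) hcn (by omega) (by omega) (Or.inl rfl)

lemma glue (a b c d : ℕ) (hb1 : 1 ≤ b) (hbn : b < n) (hc1 : 1 ≤ c) (hcn : c < n)
    (hd1 : 1 ≤ d) (hdn : d < n) (hint : b = c + 1 ∨ c = b + 1) :
    hb n a b * hb n c d = hb n a d := by
  rcases le_or_gt c d with h | h
  · obtain ⟨k, rfl⟩ := Nat.exists_eq_add_of_le h
    exact glueUp k a b c hb1 hbn hc1 hdn hint
  · have e : c - (c - d) = d := by omega
    have h2 := glueDown (c - d) a b c hb1 hbn (by omega) hcn hint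
    rwa [e] at h2

end Blocks
section Zigzag

variable {n : ℕ}

/-- Zigzag words: nonempty words in the letters `h_1, …, h_{n-1}` in which consecutive
letters differ by exactly one. -/
inductive Zig (n : ℕ) : ℕ → ℕ → List ℕ → Prop
  | single (a : ℕ) : 1 ≤ a → a < n → Zig n a a [a]
  | cons (a c b : ℕ) (t : List ℕ) : 1 ≤ a → a < n → (a = c + 1 ∨ c = a + 1) →
      Zig n c b t → Zig n a b (a :: t)

lemma Zig.bounds {a b : ℕ} {l : List ℕ} (h : Zig n a b l) :
    1 ≤ a ∧ a < n ∧ 1 ≤ b ∧ b < n := by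
  induction h with
  | single a h1 h2 => exact ⟨h1, h2, h1, h2⟩
  | cons a c b t h1 h2 hint hz ih => exact ⟨h1, h2, ih.2.2⟩

lemma Zig.hb_eq {a b : ℕ} {l : List ℕ} (h : Zig n a b l) :
    (kcon n).mk' (ofList l) = hb n a b := by
  induction h with
  | single a h1 h2 => rw [hb_self]; rfl
  | cons a c b t h1 h2 hint hz ih =>
      rw [ofList_cons, map_mul, ih]
      obtain ⟨hc1, hcn, hb1', hbn'⟩ := hz.bounds
      have e : (kcon n).mk' (of a) = hb n a a := (hb_self a).symm
      rw [e]
      exact glue a a c b h1 h2 hc1 hcn hb1' hbn' hint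

lemma zigUp : ∀ (k a : ℕ), 1 ≤ a → a + k < n → Zig n a (a + k) (List.range' a (k + 1))
  | 0, a, h1, h2 => by
      have e : List.range' a 1 = [a] := rfl
      rw [e]
      simpa using Zig.single a h1 (by omega)
  | (k + 1), a, h1, h2 => by
      rw [List.range'_succ]
      have h := zigUp k (a + 1) (by omega) (by omega)
      have e : a + 1 + k = a + (k + 1) := by omega
      rw [e] at h
      exact Zig.cons a (a + 1) (a + (k + 1)) _ h1 (by omega) (Or.inr rfl) h

lemma zigDown : ∀ (k a : ℕ), 1 ≤ a - k → a < n →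
    Zig n a (a - k) ((List.range' (a - k) (k + 1)).reverse)
  | 0, a, h1, h2 => by
      have e : List.range' (a - 0) 1 = [a - 0] := rfl
      rw [e]
      simpa using Zig.single a (by omega) h2
  | (k + 1), a, h1, h2 => by
      rw [List.range'_1_concat, List.reverse_append]
      simp only [List.reverse_cons, List.reverse_nil, List.nil_append, List.singleton_append]
      have e0 : a - (k + 1) + (k + 1) = a := by omega
      rw [e0]
      have ih := zigDown k (a - 1) (by omega) (by omega)
      have e1 : a - 1 - k = a - (k + 1) := by omega
      rw [e1] at ih
      exact Zig.cons a (a - 1) (a - (k + 1)) _ (by omega) h2 (Or.inl (by omega)) ih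

lemma hb_repr (a b : ℕ) (ha1 : 1 ≤ a) (han : a < n) (hb1 : 1 ≤ b) (hbn : b < n) :
    ∃ l, Zig n a b l ∧ hb n a b = (kcon n).mk' (ofList l) := by
  rcases le_or_gt a b with h | h
  · refine ⟨List.range' a (b + 1 - a), ?_, hb_up h⟩
    have hz := zigUp (b - a) a ha1 (show a + (b - a) < n by omega)
    have e : a + (b - a) = b := by omega
    have e2 : (b - a) + 1 = b + 1 - a := by omega
    rw [e, e2] at hz
    exact hz
  · refine ⟨(List.range' b (a + 1 - b)).reverse, ?_, hb_down' h.le⟩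
    have hz := zigDown (a - b) a (show 1 ≤ a - (a - b) by omega) han
    have e : a - (a - b) = b := by omega
    have e2 : (a - b) + 1 = a + 1 - b := by omega
    rw [e, e2] at hz
    exact hz

end Zigzag

section Invariant

/-- letterwise invariant -/
def ff (n : ℕ) : ℕ → MM := fun i => if 1 ≤ i ∧ i < n then MM.ee i i else MM.zero

/-- invariant on the free monoid -/
def fhat (n : ℕ) : FreeMonoid ℕ →* MM := FreeMonoid.lift (ff n)

variable {n : ℕ}

lemma fhat_of (m : ℕ) : fhat n (of m) = ff n m := rfl

lemma key (n : ℕ) : kcon n ≤ Con.ker (fhat n) := by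
  apply Con.conGen_le.mpr
  intro x y h
  rw [Con.ker_rel]
  cases h with
  | comm i j hi1 hin hj1 hjn hij =>
      simp only [map_mul, fhat_of, ff]
      rw [if_pos ⟨hi1, hin⟩, if_pos ⟨hj1, hjn⟩]
      simp only [MM.mul_def, MM.mul']
      rw [if_neg (by omega), if_neg (by omega)]
  | braid₁ i h1 h2 =>
      simp only [map_mul, fhat_of, ff]
      rw [if_pos (show (1:ℕ) ≤ i ∧ i < n from ⟨h1, by omega⟩),
        if_pos (show (1:ℕ) ≤ i + 1 ∧ i + 1 < n from ⟨by omega, h2⟩)]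
      simp [MM.mul_def, MM.mul']
  | braid₂ i h1 h2 =>
      simp only [map_mul, fhat_of, ff]
      rw [if_pos (show (1:ℕ) ≤ i + 1 ∧ i + 1 < n from ⟨by omega, h2⟩),
        if_pos (show (1:ℕ) ≤ i ∧ i < n from ⟨h1, by omega⟩)]
      simp [MM.mul_def, MM.mul']
  | sq i h1 h2 =>
      simp only [map_mul, fhat_of, ff]
      rw [if_neg (show ¬((1:ℕ) ≤ 0 ∧ 0 < n) by omega), if_pos ⟨h1, h2⟩]
      simp only [MM.mul_def, MM.mul']
      rw [if_neg (by omega)]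
  | ccomm i h1 h2 =>
      simp only [map_mul, fhat_of, ff]
      rw [if_neg (show ¬((1:ℕ) ≤ 0 ∧ 0 < n) by omega), if_pos ⟨h1, h2⟩]
      simp only [MM.mul_def, MM.mul']

/-- The invariant homomorphism on the Kauffman monoid. -/
def Phi (n : ℕ) : K n →* MM := Con.lift (kcon n) (fhat n) (key n)

lemma Phi_mk (w : FreeMonoid ℕ) : Phi n ((kcon n).mk' w) = fhat n w :=
  Con.lift_mk' (key n) w

lemma fhat_zig {a b : ℕ} {l : List ℕ} (h : Zig n a b l) : fhat n (ofList l) = MM.ee a b := by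
  induction h with
  | single a h1 h2 =>
      have e : (ofList [a] : FreeMonoid ℕ) = of a := rfl
      rw [e, fhat_of]
      simp only [ff]
      rw [if_pos ⟨h1, h2⟩]
  | cons a c b t h1 h2 hint hz ih =>
      rw [ofList_cons, map_mul, ih, fhat_of]
      simp only [ff]
      rw [if_pos ⟨h1, h2⟩]
      simp only [MM.mul_def, MM.mul']
      rw [if_pos hint]

lemma Phi_hb (a b : ℕ) (ha1 : 1 ≤ a) (han : a < n) (hb1 : 1 ≤ b) (hbn : b < n) :
    Phi n (hb n a b) = MM.ee a b := by
  obtain ⟨l, hz, he⟩ := hb_repr a b ha1 han hb1 hbn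
  rw [he, Phi_mk, fhat_zig hz]

lemma fhat_one : ∀ l : List ℕ, fhat n (ofList l) = 1 → l = []
  | [], _ => rfl
  | x :: t, h => by
      exfalso
      rw [ofList_cons, map_mul, fhat_of] at h
      simp only [ff] at h
      split_ifs at h with hx
      · rcases hm : fhat n (ofList t) with _ | _ | ⟨c, d⟩ <;> rw [hm] at h <;>
          simp only [MM.mul_def, MM.mul', MM.one_def] at h
        · exact MM.noConfusion h
        · exact MM.noConfusion h
        · split_ifs at h <;> exact MM.noConfusion h
      · rw [MM.zmul, MM.one_def] at h
        exact MM.noConfusion h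

lemma zig_of_fhat : ∀ (l : List ℕ) (a b : ℕ), fhat n (ofList l) = MM.ee a b → Zig n a b l
  | [], a, b, h => by
      exfalso
      have e : (ofList ([] : List ℕ) : FreeMonoid ℕ) = 1 := rfl
      rw [e, map_one] at h
      simp [MM.one_def] at h
  | x :: t, a, b, h => by
      rw [ofList_cons, map_mul, fhat_of] at h
      simp only [ff] at h
      split_ifs at h with hx
      · rcases hm : fhat n (ofList t) with _ | _ | ⟨c, d⟩ <;> rw [hm] at h
        · rw [MM.mulz] at h
          exact absurd h (by simp)
        · simp only [MM.mul_def, MM.mul'] at h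
          injection h with h1 h2
          subst h1; subst h2
          have ht : t = [] := fhat_one t hm
          subst ht
          exact Zig.single x hx.1 hx.2
        · simp only [MM.mul_def, MM.mul'] at h
          split_ifs at h with hcond
          case _ =>
            injection h with h1 h2
            subst h1; subst h2
            exact Zig.cons x c _ t hx.1 hx.2 hcond (zig_of_fhat t c _ hm)
      · rw [MM.zmul] at h
        exact absurd h (by simp)

lemma eq_hb_of_Phi {y : K n} {a b : ℕ} (h : Phi n y = MM.ee a b) :
    y = hb n a b ∧ 1 ≤ a ∧ a < n ∧ 1 ≤ b ∧ b < n := by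
  obtain ⟨w, rfl⟩ := Con.mk'_surjective y
  rw [Phi_mk] at h
  have hz : Zig n a b (toList w) := by
    apply zig_of_fhat
    have e : ofList (toList w) = w := rfl
    rw [e]
    exact h
  obtain ⟨h1, h2, h3, h4⟩ := hz.bounds
  refine ⟨?_, h1, h2, h3, h4⟩
  rw [← hz.hb_eq]
  rfl

lemma good_Phi {y : K n} (h : y ∈ ES n) : MM.good (Phi n y) := by
  induction h using Submonoid.closure_induction with
  | mem x hx =>
      have hxx : x * x = x := hx
      have hP : Phi n x * Phi n x = Phi n x := by rw [← map_mul, hxx]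
      rcases hPx : Phi n x with _ | _ | ⟨a, b⟩
      · trivial
      · trivial
      · rw [hPx] at hP
        simp only [MM.mul_def, MM.mul'] at hP
        split_ifs at hP with hc
        show a % 2 ≠ b % 2
        omega
  | one => trivial
  | mul x y hx hy ihx ihy =>
      rw [map_mul]
      exact MM.good_mul ihx ihy

end Invariant
section Membership

variable {n : ℕ}

lemma pair_mem_up (a : ℕ) (h1 : 1 ≤ a) (h2 : a + 1 < n) : hb n a (a + 1) ∈ ES n := by
  apply Submonoid.subset_closure
  show hb n a (a + 1) * hb n a (a + 1) = hb n a (a + 1)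
  exact glue a (a + 1) a (a + 1) (by omega) h2 h1 (by omega) (by omega) h2 (Or.inl rfl)

lemma pair_mem_down (a : ℕ) (h1 : 1 ≤ a) (h2 : a + 1 < n) : hb n (a + 1) a ∈ ES n := by
  apply Submonoid.subset_closure
  show hb n (a + 1) a * hb n (a + 1) a = hb n (a + 1) a
  exact glue (a + 1) a (a + 1) a h1 (by omega) (by omega) h2 h1 (by omega) (Or.inr rfl)

lemma memUp : ∀ (k a : ℕ), 1 ≤ a → a + (2 * k + 1) < n → hb n a (a + (2 * k + 1)) ∈ ES n
  | 0, a, h1, h2 => by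
      have e : a + (2 * 0 + 1) = a + 1 := by omega
      rw [e]
      exact pair_mem_up a h1 (by omega)
  | (k + 1), a, h1, h2 => by
      have hglue := glue (n := n) a (a + 1) (a + 2) (a + 2 + (2 * k + 1)) (by omega) (by omega)
        (by omega) (by omega) (by omega) (by omega) (Or.inr rfl)
      have e : a + (2 * (k + 1) + 1) = a + 2 + (2 * k + 1) := by omega
      rw [e, ← hglue]
      exact mul_mem (pair_mem_up a h1 (show a + 1 < n by omega))
        (memUp k (a + 2) (show 1 ≤ a + 2 by omega) (show a + 2 + (2 * k + 1) < n by omega))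

lemma memDown : ∀ (k a : ℕ), 1 ≤ a - (2 * k + 1) → a < n → hb n a (a - (2 * k + 1)) ∈ ES n
  | 0, a, h1, h2 => by
      obtain ⟨a', rfl⟩ : ∃ a', a = a' + 1 := ⟨a - 1, by omega⟩
      have e : a' + 1 - (2 * 0 + 1) = a' := by omega
      rw [e]
      exact pair_mem_down a' (by omega) (by omega)
  | (k + 1), a, h1, h2 => by
      obtain ⟨a', rfl⟩ : ∃ a', a = a' + 2 := ⟨a - 2, by omega⟩
      have hglue := glue (n := n) (a' + 2) (a' + 1) a' (a' - (2 * k + 1)) (by omega) (by omega)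
        (by omega) (by omega) (by omega) (by omega) (Or.inl rfl)
      have e : a' + 2 - (2 * (k + 1) + 1) = a' - (2 * k + 1) := by omega
      rw [e, ← hglue]
      exact mul_mem (pair_mem_down (a' + 1) (show 1 ≤ a' + 1 by omega) (show a' + 1 + 1 < n by omega))
        (memDown k a' (show 1 ≤ a' - (2 * k + 1) by omega) (show a' < n by omega))

lemma hb_mem (a b : ℕ) (ha1 : 1 ≤ a) (han : a < n) (hb1 : 1 ≤ b) (hbn : b < n)
    (hpar : a % 2 ≠ b % 2) : hb n a b ∈ ES n := by
  rcases le_or_gt a b with h | h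
  · obtain ⟨k, hk⟩ : ∃ k, b = a + (2 * k + 1) := ⟨(b - a - 1) / 2, by omega⟩
    rw [hk]
    exact memUp k a ha1 (by omega)
  · obtain ⟨k, hk⟩ : ∃ k, b = a - (2 * k + 1) ∧ 2 * k + 1 ≤ a := ⟨(a - b - 1) / 2, by omega, by omega⟩
    rw [hk.1]
    exact memDown k a (by omega) han

end Membership

section JApi

lemma Jle_refl {M : Type*} [Monoid M] (x : M) : Jle x x := ⟨1, 1, by simp⟩

lemma Jle_trans {M : Type*} [Monoid M] {x y z : M} (h1 : Jle x y) (h2 : Jle y z) : Jle x z := by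
  obtain ⟨a, b, h1⟩ := h1
  obtain ⟨c, d, h2⟩ := h2
  exact ⟨a * c, d * b, by rw [h1, h2]; simp [mul_assoc]⟩

end JApi
section Main

variable {n : ℕ}

/-- Classification: anything `J`-related (inside `⟨E_n⟩`) to a block `h[i,j]` is itself a
block `h[a,b]` with `a ≡ i` and `b ≡ j (mod 2)`. -/
lemma classify (x y : ES n) (i j : ℕ) (hi1 : 1 ≤ i) (hin : i < n) (hj1 : 1 ≤ j) (hjn : j < n)
    (hx : (x : K n) = hb n i j) (hJ : JRel x y) :
    ∃ a b, 1 ≤ a ∧ a < n ∧ 1 ≤ b ∧ b < n ∧ a % 2 = i % 2 ∧ b % 2 = j % 2 ∧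
      (y : K n) = hb n a b := by
  obtain ⟨⟨u, v, hxy⟩, ⟨u', v', hyx⟩⟩ := hJ
  have hK1 : (x : K n) = (u : K n) * (y : K n) * (v : K n) := by
    rw [hxy]; simp [Submonoid.coe_mul]
  have hK2 : (y : K n) = (u' : K n) * (x : K n) * (v' : K n) := by
    rw [hyx]; simp [Submonoid.coe_mul]
  have hPx : Phi n (x : K n) = MM.ee i j := by
    rw [hx]; exact Phi_hb i j hi1 hin hj1 hjn
  have e1 : MM.ee i j = Phi n (u : K n) * Phi n (y : K n) * Phi n (v : K n) := by
    rw [← hPx, hK1, map_mul, map_mul]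
  have e2 : Phi n (y : K n) = Phi n (u' : K n) * MM.ee i j * Phi n (v' : K n) := by
    rw [hK2, map_mul, map_mul, hPx]
  rcases hPy : Phi n (y : K n) with _ | _ | ⟨a, b⟩
  · rw [hPy, MM.mulz, MM.zmul] at e1
    exact absurd e1 (by simp)
  · rw [hPy] at e2
    exact absurd e2.symm MM.sandwich_ne_one
  · rw [hPy] at e1
    obtain ⟨heq, ha1, han, hb1, hbn⟩ := eq_hb_of_Phi hPy
    have hpar := MM.sandwich_parity (good_Phi u.2) (good_Phi v.2) e1.symm
    exact ⟨a, b, ha1, han, hb1, hbn, hpar.1.symm, hpar.2.symm, heq⟩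

lemma incomp (x y : ES n) (i j a b : ℕ) (hi1 : 1 ≤ i) (hin : i < n) (hj1 : 1 ≤ j) (hjn : j < n)
    (ha1 : 1 ≤ a) (han : a < n) (hb1 : 1 ≤ b) (hbn : b < n)
    (hx : (x : K n) = hb n i j) (hy : (y : K n) = hb n a b)
    (hpar : i % 2 ≠ a % 2 ∨ j % 2 ≠ b % 2) : ¬ Jle x y := by
  rintro ⟨u, v, hxy⟩
  have hK : (x : K n) = (u : K n) * (y : K n) * (v : K n) := by
    rw [hxy]; simp [Submonoid.coe_mul]
  have e1 : Phi n (u : K n) * MM.ee a b * Phi n (v : K n) = MM.ee i j := by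
    rw [← Phi_hb a b ha1 han hb1 hbn, ← hy, ← map_mul, ← map_mul, ← hK, hx]
    exact Phi_hb i j hi1 hin hj1 hjn
  have hp := MM.sandwich_parity (good_Phi u.2) (good_Phi v.2) e1
  omega

end Main
section Reps

variable {n : ℕ}

lemma jd1 (hn : 3 ≤ n) (ht1 : hb n 1 2 ∈ ES n) (z : ES n) (hz : z ∈ D1 n) :
    JRel (⟨hb n 1 2, ht1⟩ : ES n) z := by
  have h1n : 1 < n := by omega
  have h2n : 2 < n := by omega
  obtain ⟨i, j, hi1, hin, hj1, hjn, hio, hje, hzc⟩ := hz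
  constructor
  · -- Jle t1 z
    by_cases hi : i = 1
    · subst hi
      refine ⟨⟨hb n 1 2, ht1⟩,
        ⟨hb n (j - 1) 2, hb_mem _ _ (by omega) (by omega) (by omega) h2n (by omega)⟩, ?_⟩
      apply Subtype.ext
      simp only [Submonoid.coe_mul]
      show hb n 1 2 = hb n 1 2 * (z : K n) * hb n (j - 1) 2
      rw [hzc, glue 1 2 1 j (by omega) h2n (by omega) h1n hj1 hjn (Or.inl rfl),
        glue 1 j (j - 1) 2 hj1 hjn (by omega) (by omega) (by omega) h2n (Or.inl (by omega))]
    · have hi2 : 2 ≤ i := by omega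
      refine ⟨⟨hb n 1 (i - 1), hb_mem _ _ (by omega) h1n (by omega) (by omega) (by omega)⟩,
        ⟨hb n (j - 1) 2, hb_mem _ _ (by omega) (by omega) (by omega) h2n (by omega)⟩, ?_⟩
      apply Subtype.ext
      simp only [Submonoid.coe_mul]
      show hb n 1 2 = hb n 1 (i - 1) * (z : K n) * hb n (j - 1) 2
      rw [hzc, glue 1 (i - 1) i j (by omega) (by omega) hi1 hin hj1 hjn (Or.inr (by omega)),
        glue 1 j (j - 1) 2 hj1 hjn (by omega) (by omega) (by omega) h2n (Or.inl (by omega))]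
  · -- Jle z t1
    refine ⟨⟨hb n i 2, hb_mem _ _ hi1 hin (by omega) h2n (by omega)⟩,
      ⟨hb n 1 j, hb_mem _ _ (by omega) h1n hj1 hjn (by omega)⟩, ?_⟩
    apply Subtype.ext
    simp only [Submonoid.coe_mul]
    show (z : K n) = hb n i 2 * hb n 1 2 * hb n 1 j
    rw [hzc, glue i 2 1 2 (by omega) h2n (by omega) h1n (by omega) h2n (Or.inl rfl),
      glue i 2 1 j (by omega) h2n (by omega) h1n hj1 hjn (Or.inl rfl)]

lemma jd2 (hn : 3 ≤ n) (ht2 : hb n 2 1 ∈ ES n) (z : ES n) (hz : z ∈ D2 n) :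
    JRel (⟨hb n 2 1, ht2⟩ : ES n) z := by
  have h1n : 1 < n := by omega
  have h2n : 2 < n := by omega
  obtain ⟨i, j, hi1, hin, hj1, hjn, hie, hjo, hzc⟩ := hz
  have hi2 : 2 ≤ i := by omega
  constructor
  · -- Jle t2 z
    by_cases hj : j = 1
    · subst hj
      refine ⟨⟨hb n 2 (i - 1), hb_mem _ _ (by omega) h2n (by omega) (by omega) (by omega)⟩,
        ⟨hb n 2 1, ht2⟩, ?_⟩
      apply Subtype.ext
      simp only [Submonoid.coe_mul]
      show hb n 2 1 = hb n 2 (i - 1) * (z : K n) * hb n 2 1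
      rw [hzc, glue 2 (i - 1) i 1 (by omega) (by omega) hi1 hin (by omega) h1n (Or.inr (by omega)),
        glue 2 1 2 1 (by omega) h1n (by omega) h2n (by omega) h1n (Or.inr rfl)]
    · have hj3 : 3 ≤ j := by omega
      refine ⟨⟨hb n 2 (i - 1), hb_mem _ _ (by omega) h2n (by omega) (by omega) (by omega)⟩,
        ⟨hb n (j - 1) 1, hb_mem _ _ (by omega) (by omega) (by omega) h1n (by omega)⟩, ?_⟩
      apply Subtype.ext
      simp only [Submonoid.coe_mul]
      show hb n 2 1 = hb n 2 (i - 1) * (z : K n) * hb n (j - 1) 1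
      rw [hzc, glue 2 (i - 1) i j (by omega) (by omega) hi1 hin hj1 hjn (Or.inr (by omega)),
        glue 2 j (j - 1) 1 hj1 hjn (by omega) (by omega) (by omega) h1n (Or.inl (by omega))]
  · -- Jle z t2
    refine ⟨⟨hb n i 1, hb_mem _ _ hi1 hin (by omega) h1n (by omega)⟩,
      ⟨hb n 2 j, hb_mem _ _ (by omega) h2n hj1 hjn (by omega)⟩, ?_⟩
    apply Subtype.ext
    simp only [Submonoid.coe_mul]
    show (z : K n) = hb n i 1 * hb n 2 1 * hb n 2 j
    rw [hzc, glue i 1 2 1 (by omega) h1n (by omega) h2n (by omega) h1n (Or.inr rfl),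
      glue i 1 2 j (by omega) h1n (by omega) h2n hj1 hjn (Or.inr rfl)]

end Reps
/-- Lemma 4.1 of the paper.  `D_1` and `D_2` are distinct `J`-classes of
`⟨E_n⟩`, incomparable in the partial order on `J`-classes. -/
theorem D1_D2_J_classes (n : ℕ) (hn : 3 ≤ n) :
    (D1 n).Nonempty ∧ (D2 n).Nonempty ∧
    (∀ x ∈ D1 n, ∀ y : ES n, y ∈ D1 n ↔ JRel x y) ∧
    (∀ x ∈ D2 n, ∀ y : ES n, y ∈ D2 n ↔ JRel x y) ∧
    D1 n ≠ D2 n ∧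
    (∀ x ∈ D1 n, ∀ y ∈ D2 n, ¬ Jle x y) ∧
    (∀ x ∈ D2 n, ∀ y ∈ D1 n, ¬ Jle x y) := by
  have h1n : 1 < n := by omega
  have h2n : 2 < n := by omega
  have ht1 : hb n 1 2 ∈ ES n := hb_mem 1 2 (by omega) h1n (by omega) h2n (by omega)
  have ht2 : hb n 2 1 ∈ ES n := hb_mem 2 1 (by omega) h2n (by omega) h1n (by omega)
  have ht1D : (⟨hb n 1 2, ht1⟩ : ES n) ∈ D1 n :=
    ⟨1, 2, le_refl 1, h1n, by omega, h2n, rfl, rfl, rfl⟩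
  have ht2D : (⟨hb n 2 1, ht2⟩ : ES n) ∈ D2 n :=
    ⟨2, 1, by omega, h2n, le_refl 1, h1n, rfl, rfl, rfl⟩
  have incomp12 : ∀ x ∈ D1 n, ∀ y ∈ D2 n, ¬ Jle x y := by
    rintro x ⟨i, j, hi1, hin, hj1, hjn, hio, hje, hx⟩ y ⟨a, b, ha1, han, hb1, hbn, hae, hbo, hy⟩
    exact incomp x y i j a b hi1 hin hj1 hjn ha1 han hb1 hbn hx hy (Or.inl (by omega))
  have incomp21 : ∀ x ∈ D2 n, ∀ y ∈ D1 n, ¬ Jle x y := by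
    rintro x ⟨i, j, hi1, hin, hj1, hjn, hie, hjo, hx⟩ y ⟨a, b, ha1, han, hb1, hbn, hao, hbe, hy⟩
    exact incomp x y i j a b hi1 hin hj1 hjn ha1 han hb1 hbn hx hy (Or.inl (by omega))
  have item3 : ∀ x ∈ D1 n, ∀ y : ES n, y ∈ D1 n ↔ JRel x y := by
    intro x hx y
    constructor
    · intro hy
      have h1 := jd1 hn ht1 x hx
      have h2 := jd1 hn ht1 y hy
      exact ⟨Jle_trans h1.2 h2.1, Jle_trans h2.2 h1.1⟩
    · intro hJ
      obtain ⟨i, j, hi1, hin, hj1, hjn, hio, hje, hx'⟩ := hx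
      obtain ⟨a, b, ha1, han, hb1, hbn, hpa, hpb, hy⟩ :=
        classify x y i j hi1 hin hj1 hjn hx' hJ
      exact ⟨a, b, ha1, han, hb1, hbn, by omega, by omega, hy⟩
  have item4 : ∀ x ∈ D2 n, ∀ y : ES n, y ∈ D2 n ↔ JRel x y := by
    intro x hx y
    constructor
    · intro hy
      have h1 := jd2 hn ht2 x hx
      have h2 := jd2 hn ht2 y hy
      exact ⟨Jle_trans h1.2 h2.1, Jle_trans h2.2 h1.1⟩
    · intro hJ
      obtain ⟨i, j, hi1, hin, hj1, hjn, hie, hjo, hx'⟩ := hx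
      obtain ⟨a, b, ha1, han, hb1, hbn, hpa, hpb, hy⟩ :=
        classify x y i j hi1 hin hj1 hjn hx' hJ
      exact ⟨a, b, ha1, han, hb1, hbn, by omega, by omega, hy⟩
  have hne : D1 n ≠ D2 n := by
    intro h
    have h2 : (⟨hb n 1 2, ht1⟩ : ES n) ∈ D2 n := h ▸ ht1D
    exact incomp12 _ ht1D _ h2 (Jle_refl _)
  exact ⟨⟨_, ht1D⟩, ⟨_, ht2D⟩, item3, item4, hne, incomp12, incomp21⟩

end Kauffman
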